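/- In the two-candidate reduced instance: if there exists A ⊆ {1, …, m} with |A| = ℓ and ⋃_{i ∈ A} S_i = {1, …, 3ℓ}, then for the deletion set W = {v_i : i ∈ {1,…,m} \ A}, candidate 1 uniquely wins the election restricted to W; indeed candidate 1 receives 1 + 3ℓm votes and candidate 0 receives 3ℓm votes among the vertices of H_W. -/

import Mathlib

/-- Vertices of the two-candidate reduced instance: the path vertices
`u_1, …, u_{ℓ(3m−1)}` (0-indexed as `u i` for `i : Fin (ℓ * (3 * m - 1))`, so `u_1` is
`u ⟨0, _⟩`), the vertex `r`, the vertices `v_1, …, v_m`, and the vertices `w_{j,k}` for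
`j ∈ [m]`, `k ∈ [3ℓ]` (both 0-indexed). -/
inductive V2 (ℓ m : ℕ) : Type
  | u (i : Fin (ℓ * (3 * m - 1))) : V2 ℓ m
  | r : V2 ℓ m
  | v (i : Fin m) : V2 ℓ m
  | w (j : Fin m) (k : Fin (3 * ℓ)) : V2 ℓ m
  deriving DecidableEq

/-- Base edge relation of the two-candidate reduced instance: `u_i ~ u_{i+1}`,
`u_{ℓ(3m−1)} ~ r`, `r ~ v_i` for all `i`, and `v_i ~ w_{j,k}` iff `k ∈ S i`. -/
def baseRel2 (ℓ m : ℕ) (S : Fin m → Finset (Fin (3 * ℓ))) :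
    V2 ℓ m → V2 ℓ m → Prop
  | .u i, .u i' => (i : ℕ) + 1 = (i' : ℕ)
  | .u i, .r => (i : ℕ) + 1 = ℓ * (3 * m - 1)
  | .r, .v _ => True
  | .v i, .w _ k => k ∈ S i
  | _, _ => False

/-- The graph of the two-candidate reduced instance. -/
def G2 (ℓ m : ℕ) (S : Fin m → Finset (Fin (3 * ℓ))) : SimpleGraph (V2 ℓ m) :=
  SimpleGraph.fromRel (baseRel2 ℓ m S)

/-- The voting function of the two-candidate reduced instance: `u`'s and `v`'s vote for
candidate `0`; `r` and the `w`'s vote for candidate `1`. -/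
def τ2 (ℓ m : ℕ) : V2 ℓ m → Fin 2
  | .u _ => 0
  | .r => 1
  | .v _ => 0
  | .w _ _ => 1

/-- The distinguished vertex `x = u_1`. -/
def x2 (ℓ m : ℕ) (h : 0 < ℓ * (3 * m - 1)) : V2 ℓ m := V2.u ⟨0, h⟩

/-- `HW G W x`: the set of vertices reachable from `x` in the subgraph of `G` induced on
the complement of `W` (each step of a connecting walk must avoid `W`). -/
def HW {V : Type*} (G : SimpleGraph V) (W : Set V) (x : V) : Set V :=
  {z | Relation.ReflTransGen (fun a b => G.Adj a b ∧ a ∉ W ∧ b ∉ W) x z}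

/-- With two candidates, candidate `1` uniquely wins the election restricted to `W` iff
`|H_W ∩ τ⁻¹(1)| > |H_W ∩ τ⁻¹(0)|`. -/
def wins2 (ℓ m : ℕ) (S : Fin m → Finset (Fin (3 * ℓ))) (x : V2 ℓ m)
    (W : Set (V2 ℓ m)) : Prop :=
  (HW (G2 ℓ m S) W x ∩ τ2 ℓ m ⁻¹' {0}).ncard <
    (HW (G2 ℓ m S) W x ∩ τ2 ℓ m ⁻¹' {1}).ncard

/-- If there is an exact cover `A` (with `|A| = ℓ` and `⋃_{i ∈ A} S_i = {1, …, 3ℓ}`), then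
deleting `W = {v_i : i ∉ A}` makes candidate `1` uniquely win; indeed candidate `1` gets
`1 + 3ℓm` votes and candidate `0` gets `3ℓm` votes. -/
theorem exact_cover_implies_wins (ℓ m : ℕ) (hℓ : 1 ≤ ℓ) (hm : 1 ≤ m)
    (S : Fin m → Finset (Fin (3 * ℓ)))
    (hS3 : ∀ i, (S i).card = 3)
    (hcov : Finset.univ.biUnion S = Finset.univ)
    (A : Finset (Fin m)) (hA : A.card = ℓ) (hAcov : A.biUnion S = Finset.univ) :
    (HW (G2 ℓ m S) {z | ∃ i, i ∉ A ∧ z = V2.v i}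
        (x2 ℓ m (Nat.mul_pos hℓ (by omega))) ∩ τ2 ℓ m ⁻¹' {1}).ncard = 1 + 3 * ℓ * m ∧
    (HW (G2 ℓ m S) {z | ∃ i, i ∉ A ∧ z = V2.v i}
        (x2 ℓ m (Nat.mul_pos hℓ (by omega))) ∩ τ2 ℓ m ⁻¹' {0}).ncard = 3 * ℓ * m ∧
    wins2 ℓ m S (x2 ℓ m (Nat.mul_pos hℓ (by omega))) {z | ∃ i, i ∉ A ∧ z = V2.v i} := by
  have hpos : 0 < ℓ * (3 * m - 1) := Nat.mul_pos hℓ (by omega)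
  set W : Set (V2 ℓ m) := {z | ∃ i, i ∉ A ∧ z = V2.v i} with hWdef
  set x0 : V2 ℓ m := x2 ℓ m hpos with hx0
  -- membership facts for W
  have hWu : ∀ i, (V2.u i : V2 ℓ m) ∉ W := by
    rintro i ⟨j, hj, h⟩; exact nomatch h
  have hWr : (V2.r : V2 ℓ m) ∉ W := by
    rintro ⟨j, hj, h⟩; exact nomatch h
  have hWw : ∀ j k, (V2.w j k : V2 ℓ m) ∉ W := by
    rintro j k ⟨j', hj', h⟩; exact nomatch h
  have hWv : ∀ i, (V2.v i : V2 ℓ m) ∈ W ↔ i ∉ A := by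
    intro i
    constructor
    · rintro ⟨j, hj, h⟩
      injection h with h'
      exact h' ▸ hj
    · intro h; exact ⟨i, h, rfl⟩
  -- adjacency facts
  have adj_uu : ∀ (i i' : Fin (ℓ * (3 * m - 1))), (i : ℕ) + 1 = (i' : ℕ) →
      (G2 ℓ m S).Adj (V2.u i) (V2.u i') := by
    intro i i' h
    refine (SimpleGraph.fromRel_adj _ _ _).2 ⟨?_, Or.inl h⟩
    intro he
    injection he with he'
    omega
  have adj_ur : ∀ (i : Fin (ℓ * (3 * m - 1))), (i : ℕ) + 1 = ℓ * (3 * m - 1) →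
      (G2 ℓ m S).Adj (V2.u i) V2.r := by
    intro i h
    exact (SimpleGraph.fromRel_adj _ _ _).2 ⟨(fun he => nomatch he), Or.inl h⟩
  have adj_rv : ∀ (i : Fin m), (G2 ℓ m S).Adj V2.r (V2.v i) := by
    intro i
    exact (SimpleGraph.fromRel_adj _ _ _).2 ⟨(fun he => nomatch he), Or.inl trivial⟩
  have adj_vw : ∀ (i j : Fin m) (k : Fin (3 * ℓ)), k ∈ S i →
      (G2 ℓ m S).Adj (V2.v i) (V2.w j k) := by
    intro i j k hk
    exact (SimpleGraph.fromRel_adj _ _ _).2 ⟨(fun he => nomatch he), Or.inl hk⟩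
  -- reachability
  set st : V2 ℓ m → V2 ℓ m → Prop :=
    fun a b => (G2 ℓ m S).Adj a b ∧ a ∉ W ∧ b ∉ W with hst
  have reach_u : ∀ (n : ℕ) (hn : n < ℓ * (3 * m - 1)),
      Relation.ReflTransGen st x0 (V2.u ⟨n, hn⟩) := by
    intro n
    induction n with
    | zero => intro hn; exact Relation.ReflTransGen.refl
    | succ k ih =>
      intro hn
      exact (ih (by omega)).tail
        ⟨adj_uu ⟨k, by omega⟩ ⟨k + 1, hn⟩ rfl, hWu _, hWu _⟩
  have reach_r : Relation.ReflTransGen st x0 V2.r := by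
    refine (reach_u (ℓ * (3 * m - 1) - 1) (by omega)).tail
      ⟨adj_ur ⟨ℓ * (3 * m - 1) - 1, by omega⟩ (by simp; omega), hWu _, hWr⟩
  have reach_v : ∀ i ∈ A, Relation.ReflTransGen st x0 (V2.v i) := by
    intro i hi
    exact reach_r.tail ⟨adj_rv i, hWr, (hWv i).not.2 (by simpa using hi)⟩
  have reach_w : ∀ j k, Relation.ReflTransGen st x0 (V2.w j k) := by
    intro j k
    have hk : k ∈ A.biUnion S := hAcov ▸ Finset.mem_univ k
    obtain ⟨i, hi, hki⟩ := Finset.mem_biUnion.1 hk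
    exact (reach_v i hi).tail ⟨adj_vw i j k hki, (hWv i).not.2 (by simpa using hi), hWw j k⟩
  -- the key characterization
  have key : HW (G2 ℓ m S) W x0 = Wᶜ := by
    apply Set.Subset.antisymm
    · intro z hz
      induction hz with
      | refl => exact hWu _
      | tail _ h ih => exact h.2.2
    · intro z hz
      cases z with
      | u i => exact reach_u i.1 i.2
      | r => exact reach_r
      | v i =>
        refine reach_v i ?_
        by_contra hi
        exact hz ((hWv i).2 hi)
      | w j k => exact reach_w j k
  rw [wins2, key]
  -- candidate 1 set
  have h1 : Wᶜ ∩ τ2 ℓ m ⁻¹' {1} =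
      insert V2.r (Set.range fun p : Fin m × Fin (3 * ℓ) => V2.w p.1 p.2) := by
    ext z
    cases z with
    | u i => simp [τ2, Fin.ext_iff]
    | r => simp [τ2, hWr]
    | v i => simp [τ2, Fin.ext_iff, hWv]
    | w j k =>
      simp only [Set.mem_inter_iff, Set.mem_compl_iff, Set.mem_preimage,
        Set.mem_singleton_iff, τ2, Set.mem_insert_iff, Set.mem_range]
      exact ⟨fun _ => Or.inr ⟨(j, k), rfl⟩, fun _ => ⟨hWw j k, trivial⟩⟩
  -- candidate 0 set
  have h0 : Wᶜ ∩ τ2 ℓ m ⁻¹' {0} =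
      (Set.range fun i : Fin (ℓ * (3 * m - 1)) => V2.u i) ∪ (V2.v '' (A : Set (Fin m))) := by
    ext z
    cases z with
    | u i =>
      simp only [Set.mem_inter_iff, Set.mem_compl_iff, Set.mem_preimage,
        Set.mem_singleton_iff, τ2, Set.mem_union, Set.mem_range, Set.mem_image]
      exact ⟨fun _ => Or.inl ⟨i, rfl⟩, fun _ => ⟨hWu i, trivial⟩⟩
    | r => simp [τ2, Fin.ext_iff]
    | v i =>
      simp only [Set.mem_inter_iff, Set.mem_compl_iff, Set.mem_preimage,
        Set.mem_singleton_iff, τ2, Set.mem_union, Set.mem_range, Set.mem_image,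
        Finset.mem_coe]
      constructor
      · rintro ⟨h, -⟩
        refine Or.inr ⟨i, ?_, rfl⟩
        by_contra hi
        exact h ((hWv i).2 hi)
      · rintro (⟨p, h⟩ | ⟨p, hp, h⟩)
        · exact nomatch h
        · injection h with h'
          exact ⟨(hWv i).not.2 (by simp [← h', hp]), trivial⟩
    | w j k => simp [τ2, Fin.ext_iff]
  -- cardinalities
  have hw_inj : Function.Injective fun p : Fin m × Fin (3 * ℓ) => V2.w p.1 p.2 := by
    rintro ⟨j, k⟩ ⟨j', k'⟩ h
    injection h with h1 h2
    simpa using ⟨h1, h2⟩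
  have hu_inj : Function.Injective fun i : Fin (ℓ * (3 * m - 1)) => V2.u (ℓ := ℓ) (m := m) i := by
    intro i i' h
    injection h
  have hv_inj : Function.Injective (V2.v (ℓ := ℓ) (m := m)) := by
    intro i i' h
    injection h
  have hrange_w : Set.range (fun p : Fin m × Fin (3 * ℓ) => V2.w p.1 p.2) =
      ↑(Finset.univ.image fun p : Fin m × Fin (3 * ℓ) => V2.w p.1 p.2) := by
    simp
  have hrange_u : Set.range (fun i : Fin (ℓ * (3 * m - 1)) => V2.u (ℓ := ℓ) (m := m) i) =
      ↑(Finset.univ.image fun i : Fin (ℓ * (3 * m - 1)) => V2.u (ℓ := ℓ) (m := m) i) := by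
    simp
  have hcard1 : (Wᶜ ∩ τ2 ℓ m ⁻¹' {1}).ncard = 1 + 3 * ℓ * m := by
    rw [h1, hrange_w]
    rw [Set.ncard_insert_of_notMem (by
        simp only [Finset.mem_coe, Finset.coe_image, Set.mem_image]
        rintro ⟨p, -, h⟩
        exact nomatch h)
      (Set.toFinite _)]
    rw [Set.ncard_coe_finset, Finset.card_image_of_injective _ hw_inj, Finset.card_univ]
    simp [Fintype.card_prod]
    ring
  have hcard0 : (Wᶜ ∩ τ2 ℓ m ⁻¹' {0}).ncard = 3 * ℓ * m := by
    rw [h0]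
    rw [Set.ncard_union_eq (by
        rw [Set.disjoint_left]
        rintro z ⟨i, rfl⟩ ⟨p, -, h⟩
        exact nomatch h)
      (Set.toFinite _) (Set.toFinite _)]
    rw [hrange_u, Set.ncard_coe_finset, Finset.card_image_of_injective _ hu_inj,
      Finset.card_univ, Set.ncard_image_of_injective _ hv_inj, Set.ncard_coe_finset, hA]
    simp only [Fintype.card_fin]
    obtain ⟨m1, rfl⟩ : ∃ m1, m = m1 + 1 := ⟨m - 1, by omega⟩
    have h31 : 3 * (m1 + 1) - 1 = 3 * m1 + 2 := by omega
    rw [h31]; ring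
  rw [key] at *
  exact ⟨hcard1, hcard0, by rw [hcard0, hcard1]; omega⟩
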